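/- arXiv:1607.04727 — 2 statements merged into one kernel-verified Lean document; each statement's English description precedes it below -/
import Mathlib

section
/- Fix t > 0 and two nonnegative weight kernels F₁(t,·), F₂(t,·) on (0,t), defining weighted integral operators I₁[f] = ∫₀ᵗ τ^k F₁(t,τ) f(τ) dτ and I₂[f] = ∫₀ᵗ τ^k F₂(t,τ) f(τ) dτ. If f and g are synchronous on [0,∞) and x, y : [0,∞) → [0,∞) are nonnegative, and all integrals exist, then I₁[x]·I₂[y·f·g] + I₂[y]·I₁[x·f·g] ≥ I₁[x·f]·I₂[y·g] + I₂[y·f]·I₁[x·g]. -/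
open MeasureTheory

/-- Weighted integral operator `I[φ] = ∫₀ᵗ τ^k F(τ) φ(τ) dτ`. -/
noncomputable def wInt (k t : ℝ) (F φ : ℝ → ℝ) : ℝ :=
  ∫ τ in (0:ℝ)..t, τ ^ k * F τ * φ τ

/-- Integrability of the weighted integrand. -/
def wIntble (k t : ℝ) (F φ : ℝ → ℝ) : Prop :=
  IntervalIntegrable (fun τ => τ ^ k * F τ * φ τ) volume 0 t

/-!
With `D u = ∫ q(v) (f u - f v) (g u - g v) dv`, which is nonnegative by synchronicity and
nonnegativity of `q`, the difference of the two sides of the inequality is `∫ p(u) D(u) du ≥ 0`.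
Expanding the products shows this is exactly `I₁[x] I₂[y f g] + I₂[y] I₁[x f g] - I₁[x f] I₂[y g]
- I₂[y f] I₁[x g]` for `p = τ^k F₁ x` and `q = τ^k F₂ y`. Integrating the inner variable first,
pointwise in the outer one, avoids any integrability condition on the product measure.
-/

section Chebyshev

variable {α : Type*} [MeasurableSpace α] {μ : Measure α} {p q f g : α → ℝ}

theorem integral_mul_sub_mul_sub (hq : Integrable q μ) (hqf : Integrable (fun v => q v * f v) μ)
    (hqg : Integrable (fun v => q v * g v) μ) (hqfg : Integrable (fun v => q v * f v * g v) μ)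
    (a b : ℝ) :
    ∫ v, q v * ((a - f v) * (b - g v)) ∂μ =
      a * b * ∫ v, q v ∂μ - a * ∫ v, q v * g v ∂μ - b * ∫ v, q v * f v ∂μ +
        ∫ v, q v * f v * g v ∂μ := by
  have hexpand : (fun v => q v * ((a - f v) * (b - g v))) =
      fun v => a * b * q v - a * (q v * g v) - b * (q v * f v) + q v * f v * g v := by
    funext v; ring
  rw [hexpand]
  simp (disch := fun_prop) only [integral_add, integral_sub, integral_const_mul]

theorem integral_mul_integral_add_le_of_synchronous (hp : 0 ≤ᵐ[μ] p) (hq : 0 ≤ᵐ[μ] q)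
    (hfg : ∀ᵐ u ∂μ, ∀ᵐ v ∂μ, 0 ≤ (f u - f v) * (g u - g v))
    (hp₀ : Integrable p μ) (hpf : Integrable (fun u => p u * f u) μ)
    (hpg : Integrable (fun u => p u * g u) μ) (hpfg : Integrable (fun u => p u * f u * g u) μ)
    (hq₀ : Integrable q μ) (hqf : Integrable (fun v => q v * f v) μ)
    (hqg : Integrable (fun v => q v * g v) μ) (hqfg : Integrable (fun v => q v * f v * g v) μ) :
    (∫ u, p u * f u ∂μ) * (∫ v, q v * g v ∂μ) + (∫ v, q v * f v ∂μ) * (∫ u, p u * g u ∂μ) ≤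
      (∫ u, p u ∂μ) * (∫ v, q v * f v * g v ∂μ) + (∫ v, q v ∂μ) * ∫ u, p u * f u * g u ∂μ := by
  have hD_nonneg : ∀ᵐ u ∂μ, 0 ≤ ∫ v, q v * ((f u - f v) * (g u - g v)) ∂μ := by
    filter_upwards [hfg] with u hu
    refine integral_nonneg_of_ae ?_
    filter_upwards [hq, hu] with v hqv huv using mul_nonneg hqv huv
  have hpD_nonneg : 0 ≤ ∫ u, p u * ∫ v, q v * ((f u - f v) * (g u - g v)) ∂μ ∂μ := by
    refine integral_nonneg_of_ae ?_
    filter_upwards [hp, hD_nonneg] with u hpu hDu using mul_nonneg hpu hDu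
  have hpD : (fun u => p u * ∫ v, q v * ((f u - f v) * (g u - g v)) ∂μ) = fun u =>
      (∫ v, q v ∂μ) * (p u * f u * g u) - (∫ v, q v * g v ∂μ) * (p u * f u) -
        (∫ v, q v * f v ∂μ) * (p u * g u) + (∫ v, q v * f v * g v ∂μ) * p u := by
    funext u
    rw [integral_mul_sub_mul_sub hq₀ hqf hqg hqfg]
    ring
  rw [hpD] at hpD_nonneg
  simp (disch := fun_prop) only [integral_add, integral_sub, integral_const_mul] at hpD_nonneg
  linarith

end Chebyshev

theorem wInt_eq_setIntegral_Ioo {k t : ℝ} (ht : 0 ≤ t) (F φ : ℝ → ℝ) :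
    wInt k t F φ = ∫ τ in Set.Ioo 0 t, τ ^ k * F τ * φ τ := by
  rw [wInt, intervalIntegral.integral_of_le ht, integral_Ioc_eq_integral_Ioo]

theorem wIntble.integrableOn_Ioo {k t : ℝ} {F φ : ℝ → ℝ} (ht : 0 ≤ t) (h : wIntble k t F φ) :
    IntegrableOn (fun τ => τ ^ k * F τ * φ τ) (Set.Ioo 0 t) :=
  (intervalIntegrable_iff_integrableOn_Ioo_of_le ht).1 h

theorem weighted_chebyshev_two_kernels_general (k t : ℝ) (ht : 0 < t)
    (F₁ F₂ f g x y : ℝ → ℝ)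
    (hF₁ : ∀ τ ∈ Set.Ioo (0:ℝ) t, 0 ≤ F₁ τ)
    (hF₂ : ∀ τ ∈ Set.Ioo (0:ℝ) t, 0 ≤ F₂ τ)
    (hsync : ∀ u v : ℝ, 0 ≤ u → 0 ≤ v → 0 ≤ (f u - f v) * (g u - g v))
    (hx : ∀ u : ℝ, 0 ≤ u → 0 ≤ x u) (hy : ∀ u : ℝ, 0 ≤ u → 0 ≤ y u)
    (hint : ∀ φ ∈ [x, y, fun τ => y τ * f τ * g τ, fun τ => x τ * f τ * g τ,
        fun τ => x τ * f τ, fun τ => y τ * g τ, fun τ => y τ * f τ,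
        fun τ => x τ * g τ], wIntble k t F₁ φ ∧ wIntble k t F₂ φ) :
    wInt k t F₁ x * wInt k t F₂ (fun τ => y τ * f τ * g τ) +
      wInt k t F₂ y * wInt k t F₁ (fun τ => x τ * f τ * g τ) ≥
    wInt k t F₁ (fun τ => x τ * f τ) * wInt k t F₂ (fun τ => y τ * g τ) +
      wInt k t F₂ (fun τ => y τ * f τ) * wInt k t F₁ (fun τ => x τ * g τ) := by
  simp only [List.forall_mem_cons] at hint
  obtain ⟨⟨hx₁, -⟩, ⟨-, hy₂⟩, ⟨-, hyfg₂⟩, ⟨hxfg₁, -⟩, ⟨hxf₁, -⟩, ⟨-, hyg₂⟩, ⟨-, hyf₂⟩,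
    ⟨hxg₁, -⟩, -⟩ := hint
  have on_Ioo {P : ℝ → Prop} :
      (∀ τ ∈ Set.Ioo 0 t, P τ) → ∀ᵐ τ ∂volume.restrict (Set.Ioo 0 t), P τ :=
    ae_restrict_of_forall_mem measurableSet_Ioo
  have key := integral_mul_integral_add_le_of_synchronous (μ := volume.restrict (Set.Ioo 0 t))
    (p := fun τ => τ ^ k * F₁ τ * x τ) (q := fun τ => τ ^ k * F₂ τ * y τ) (f := f) (g := g)
    (on_Ioo fun τ hτ =>
      mul_nonneg (mul_nonneg (Real.rpow_nonneg hτ.1.le k) (hF₁ τ hτ)) (hx τ hτ.1.le))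
    (on_Ioo fun τ hτ =>
      mul_nonneg (mul_nonneg (Real.rpow_nonneg hτ.1.le k) (hF₂ τ hτ)) (hy τ hτ.1.le))
    (on_Ioo fun u hu => on_Ioo fun v hv => hsync u v hu.1.le hv.1.le)
    (by simpa only [IntegrableOn, mul_assoc] using hx₁.integrableOn_Ioo ht.le)
    (by simpa only [IntegrableOn, mul_assoc] using hxf₁.integrableOn_Ioo ht.le)
    (by simpa only [IntegrableOn, mul_assoc] using hxg₁.integrableOn_Ioo ht.le)
    (by simpa only [IntegrableOn, mul_assoc] using hxfg₁.integrableOn_Ioo ht.le)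
    (by simpa only [IntegrableOn, mul_assoc] using hy₂.integrableOn_Ioo ht.le)
    (by simpa only [IntegrableOn, mul_assoc] using hyf₂.integrableOn_Ioo ht.le)
    (by simpa only [IntegrableOn, mul_assoc] using hyg₂.integrableOn_Ioo ht.le)
    (by simpa only [IntegrableOn, mul_assoc] using hyfg₂.integrableOn_Ioo ht.le)
  simp only [wInt_eq_setIntegral_Ioo ht.le, mul_assoc] at key ⊢
  linarith

theorem weighted_chebyshev_two_kernels (k t : ℝ) (hk : 0 ≤ k) (ht : 0 < t)
    (F₁ F₂ f g x y : ℝ → ℝ)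
    (hF₁ : ∀ τ ∈ Set.Ioo (0:ℝ) t, 0 ≤ F₁ τ)
    (hF₂ : ∀ τ ∈ Set.Ioo (0:ℝ) t, 0 ≤ F₂ τ)
    (hsync : ∀ u v : ℝ, 0 ≤ u → 0 ≤ v → 0 ≤ (f u - f v) * (g u - g v))
    (hx : ∀ u : ℝ, 0 ≤ u → 0 ≤ x u) (hy : ∀ u : ℝ, 0 ≤ u → 0 ≤ y u)
    (hint : ∀ φ ∈ [x, y, fun τ => y τ * f τ * g τ, fun τ => x τ * f τ * g τ,
        fun τ => x τ * f τ, fun τ => y τ * g τ, fun τ => y τ * f τ,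
        fun τ => x τ * g τ], wIntble k t F₁ φ ∧ wIntble k t F₂ φ) :
    wInt k t F₁ x * wInt k t F₂ (fun τ => y τ * f τ * g τ) +
      wInt k t F₂ y * wInt k t F₁ (fun τ => x τ * f τ * g τ) ≥
    wInt k t F₁ (fun τ => x τ * f τ) * wInt k t F₂ (fun τ => y τ * g τ) +
      wInt k t F₂ (fun τ => y τ * f τ) * wInt k t F₁ (fun τ => x τ * g τ) :=
  weighted_chebyshev_two_kernels_general k t ht F₁ F₂ f g x y hF₁ hF₂ hsync hx hy hint
end

section
/- Fix t > 0 and two nonnegative kernels defining weighted integral operators I₁ and I₂ on (0,t). Let f, g, h be positive continuous functions on [0,∞) satisfying (f(u)-f(v))(g(u)-g(v))(h(u)+h(v)) ≥ 0 for all u, v ∈ (0,t), and let x, y : [0,∞) → [0,∞) be nonnegative. Then: I₁[x]·I₂[y·f·g·h] + I₁[x·h]·I₂[y·f·g] + I₁[x·f·g]·I₂[y·h] + I₁[x·f·g·h]·I₂[y] ≥ I₁[x·f]·I₂[y·g·h] + I₁[x·g]·I₂[y·f·h] + I₁[x·g·h]·I₂[y·f] + I₁[x·f·h]·I₂[y·g].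 -/
/-!
Integrate the kernel `x(u) y(v) (f u - f v)(g u - g v)(h u + h v)`, nonnegative on `(0,t)²`, against
the two weights, first in `v` and then in `u`. The kernel expands into eight separable terms
`± a(u) b(v)`, so by linearity the iterated integral is the left side minus the right side.
-/

open MeasureTheory

open Set

section WeightedIntegral

variable {k t : ℝ} {F : ℝ → ℝ}

lemma wInt_nonneg (ht : 0 ≤ t) (hF : ∀ τ ∈ Ioo 0 t, 0 ≤ F τ) {φ : ℝ → ℝ}
    (hφ : ∀ τ ∈ Ioo 0 t, 0 ≤ φ τ) : 0 ≤ wInt k t F φ := by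
  rw [wInt, intervalIntegral.integral_of_le ht, integral_Ioc_eq_integral_Ioo]
  exact setIntegral_nonneg measurableSet_Ioo fun τ hτ =>
    mul_nonneg (mul_nonneg (Real.rpow_nonneg hτ.1.le k) (hF τ hτ)) (hφ τ hτ)

lemma wInt_finset_sum_const_mul {ι : Type*} (s : Finset ι) (c : ι → ℝ) (φ : ι → ℝ → ℝ)
    (hφ : ∀ i ∈ s, wIntble k t F (φ i)) :
    wInt k t F (fun τ => ∑ i ∈ s, c i * φ i τ) = ∑ i ∈ s, c i * wInt k t F (φ i) := by
  have hterm : ∀ τ, τ ^ k * F τ * ∑ i ∈ s, c i * φ i τ = ∑ i ∈ s, c i * (τ ^ k * F τ * φ i τ) :=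
    fun τ => by rw [Finset.mul_sum]; exact Finset.sum_congr rfl fun i _ => by ring
  simp only [wInt, hterm]
  rw [intervalIntegral.integral_finsetSum fun i hi => (hφ i hi).const_mul (c i)]
  exact Finset.sum_congr rfl fun i _ => intervalIntegral.integral_const_mul _ _

lemma wInt_pairing_nonneg {F₁ F₂ : ℝ → ℝ} (ht : 0 ≤ t) (hF₁ : ∀ τ ∈ Ioo 0 t, 0 ≤ F₁ τ)
    (hF₂ : ∀ τ ∈ Ioo 0 t, 0 ≤ F₂ τ) {ι : Type*} (s : Finset ι) (c : ι → ℝ) (φ ψ : ι → ℝ → ℝ)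
    (hφ : ∀ i ∈ s, wIntble k t F₁ (φ i)) (hψ : ∀ i ∈ s, wIntble k t F₂ (ψ i))
    (hK : ∀ u ∈ Ioo 0 t, ∀ v ∈ Ioo 0 t, 0 ≤ ∑ i ∈ s, c i * φ i u * ψ i v) :
    0 ≤ ∑ i ∈ s, c i * wInt k t F₁ (φ i) * wInt k t F₂ (ψ i) := by
  have inner : ∀ u ∈ Ioo 0 t, 0 ≤ ∑ i ∈ s, c i * φ i u * wInt k t F₂ (ψ i) := fun u hu => by
    rw [← wInt_finset_sum_const_mul s _ ψ hψ]
    exact wInt_nonneg ht hF₂ (hK u hu)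
  calc 0 ≤ wInt k t F₁ (fun u => ∑ i ∈ s, (c i * wInt k t F₂ (ψ i)) * φ i u) :=
        wInt_nonneg ht hF₁ fun u hu => by
          simpa only [mul_right_comm] using inner u hu
    _ = _ := by
        rw [wInt_finset_sum_const_mul s _ φ hφ]
        exact Finset.sum_congr rfl fun i _ => by ring

end WeightedIntegral

theorem weighted_three_function_inequality_two_weights_general (k t : ℝ) (ht : 0 < t)
    (F₁ F₂ f g h x y : ℝ → ℝ)
    (hF₁ : ∀ τ ∈ Set.Ioo (0:ℝ) t, 0 ≤ F₁ τ)
    (hF₂ : ∀ τ ∈ Set.Ioo (0:ℝ) t, 0 ≤ F₂ τ)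
    (hcond : ∀ u ∈ Set.Ioo (0:ℝ) t, ∀ v ∈ Set.Ioo (0:ℝ) t,
      0 ≤ (f u - f v) * (g u - g v) * (h u + h v))
    (hx : ∀ u : ℝ, 0 ≤ u → 0 ≤ x u) (hy : ∀ u : ℝ, 0 ≤ u → 0 ≤ y u)
    (hint₁ : ∀ φ ∈ [x, fun τ => x τ * f τ * g τ * h τ, fun τ => x τ * h τ,
        fun τ => x τ * f τ * g τ, fun τ => x τ * f τ, fun τ => x τ * g τ * h τ,
        fun τ => x τ * g τ, fun τ => x τ * f τ * h τ], wIntble k t F₁ φ)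
    (hint₂ : ∀ φ ∈ [y, fun τ => y τ * f τ * g τ * h τ, fun τ => y τ * h τ,
        fun τ => y τ * f τ * g τ, fun τ => y τ * f τ, fun τ => y τ * g τ * h τ,
        fun τ => y τ * g τ, fun τ => y τ * f τ * h τ], wIntble k t F₂ φ) :
    wInt k t F₁ x * wInt k t F₂ (fun τ => y τ * f τ * g τ * h τ) +
      wInt k t F₁ (fun τ => x τ * h τ) * wInt k t F₂ (fun τ => y τ * f τ * g τ) +
      wInt k t F₁ (fun τ => x τ * f τ * g τ) * wInt k t F₂ (fun τ => y τ * h τ) +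
      wInt k t F₁ (fun τ => x τ * f τ * g τ * h τ) * wInt k t F₂ y ≥
    wInt k t F₁ (fun τ => x τ * f τ) * wInt k t F₂ (fun τ => y τ * g τ * h τ) +
      wInt k t F₁ (fun τ => x τ * g τ) * wInt k t F₂ (fun τ => y τ * f τ * h τ) +
      wInt k t F₁ (fun τ => x τ * g τ * h τ) * wInt k t F₂ (fun τ => y τ * f τ) +
      wInt k t F₁ (fun τ => x τ * f τ * h τ) * wInt k t F₂ (fun τ => y τ * g τ) := by
  set φ : Fin 8 → ℝ → ℝ := ![x, fun τ => x τ * h τ, fun τ => x τ * f τ * g τ,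
    fun τ => x τ * f τ * g τ * h τ, fun τ => x τ * f τ, fun τ => x τ * g τ,
    fun τ => x τ * g τ * h τ, fun τ => x τ * f τ * h τ]
  set ψ : Fin 8 → ℝ → ℝ := ![fun τ => y τ * f τ * g τ * h τ, fun τ => y τ * f τ * g τ,
    fun τ => y τ * h τ, y, fun τ => y τ * g τ * h τ, fun τ => y τ * f τ * h τ,
    fun τ => y τ * f τ, fun τ => y τ * g τ]
  have hφ : ∀ i ∈ Finset.univ, wIntble k t F₁ (φ i) := by
    intro i _; fin_cases i <;> exact hint₁ _ (by simp [φ])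
  have hψ : ∀ i ∈ Finset.univ, wIntble k t F₂ (ψ i) := by
    intro i _; fin_cases i <;> exact hint₂ _ (by simp [ψ])
  have hK : ∀ u ∈ Ioo 0 t, ∀ v ∈ Ioo 0 t,
      0 ≤ ∑ i, ![1, 1, 1, 1, -1, -1, -1, -1] i * φ i u * ψ i v := fun u hu v hv => by
    have hkernel : ∑ i, ![1, 1, 1, 1, -1, -1, -1, -1] i * φ i u * ψ i v =
        x u * y v * ((f u - f v) * (g u - g v) * (h u + h v)) := by
      simp only [Fin.sum_univ_eight, Matrix.cons_val, φ, ψ]; ring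
    rw [hkernel]
    exact mul_nonneg (mul_nonneg (hx u hu.1.le) (hy v hv.1.le)) (hcond u hu v hv)
  have hpairing := wInt_pairing_nonneg ht.le hF₁ hF₂ Finset.univ _ φ ψ hφ hψ hK
  simp only [Fin.sum_univ_eight, Matrix.cons_val, φ, ψ] at hpairing
  linarith

theorem weighted_three_function_inequality_two_weights (k t : ℝ) (hk : 0 ≤ k) (ht : 0 < t)
    (F₁ F₂ f g h x y : ℝ → ℝ)
    (hF₁ : ∀ τ ∈ Set.Ioo (0:ℝ) t, 0 ≤ F₁ τ)
    (hF₂ : ∀ τ ∈ Set.Ioo (0:ℝ) t, 0 ≤ F₂ τ)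
    (hf : Continuous f) (hg : Continuous g) (hh : Continuous h)
    (hfpos : ∀ u : ℝ, 0 ≤ u → 0 < f u) (hgpos : ∀ u : ℝ, 0 ≤ u → 0 < g u)
    (hhpos : ∀ u : ℝ, 0 ≤ u → 0 < h u)
    (hcond : ∀ u ∈ Set.Ioo (0:ℝ) t, ∀ v ∈ Set.Ioo (0:ℝ) t,
      0 ≤ (f u - f v) * (g u - g v) * (h u + h v))
    (hx : ∀ u : ℝ, 0 ≤ u → 0 ≤ x u) (hy : ∀ u : ℝ, 0 ≤ u → 0 ≤ y u)
    (hint₁ : ∀ φ ∈ [x, fun τ => x τ * f τ * g τ * h τ, fun τ => x τ * h τ,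
        fun τ => x τ * f τ * g τ, fun τ => x τ * f τ, fun τ => x τ * g τ * h τ,
        fun τ => x τ * g τ, fun τ => x τ * f τ * h τ], wIntble k t F₁ φ)
    (hint₂ : ∀ φ ∈ [y, fun τ => y τ * f τ * g τ * h τ, fun τ => y τ * h τ,
        fun τ => y τ * f τ * g τ, fun τ => y τ * f τ, fun τ => y τ * g τ * h τ,
        fun τ => y τ * g τ, fun τ => y τ * f τ * h τ], wIntble k t F₂ φ) :
    wInt k t F₁ x * wInt k t F₂ (fun τ => y τ * f τ * g τ * h τ) +
      wInt k t F₁ (fun τ => x τ * h τ) * wInt k t F₂ (fun τ => y τ * f τ * g τ) +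
      wInt k t F₁ (fun τ => x τ * f τ * g τ) * wInt k t F₂ (fun τ => y τ * h τ) +
      wInt k t F₁ (fun τ => x τ * f τ * g τ * h τ) * wInt k t F₂ y ≥
    wInt k t F₁ (fun τ => x τ * f τ) * wInt k t F₂ (fun τ => y τ * g τ * h τ) +
      wInt k t F₁ (fun τ => x τ * g τ) * wInt k t F₂ (fun τ => y τ * f τ * h τ) +
      wInt k t F₁ (fun τ => x τ * g τ * h τ) * wInt k t F₂ (fun τ => y τ * f τ) +
      wInt k t F₁ (fun τ => x τ * f τ * h τ) * wInt k t F₂ (fun τ => y τ * g τ) :=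
  weighted_three_function_inequality_two_weights_general k t ht F₁ F₂ f g h x y hF₁ hF₂ hcond hx hy
    hint₁ hint₂
end
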